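/- arXiv:2401.04778 — 3 statements merged into one kernel-verified Lean document; each statement's English description precedes it below -/
import Mathlib

section
/- Let W be a random vector in ℝ^d and define k(x,y) = E[exp(i Wᵀ(x−y))], assumed real-valued (e.g. W symmetric). Then for any two probability measures P₁, P₂ on ℝ^d with characteristic functions Φ₁, Φ₂, the quantity E[k(X,X')] − E[k(X,Y')] − E[k(X',Y)] + E[k(Y,Y')], where X, X' ∼ P₁ and Y, Y' ∼ P₂ are mutually independent and independent of W, equals E[|Φ₁(W) − Φ₂(W)|²]. -/
/-!
Write `k x y = φ(x - y)` with `φ` the characteristic function of `W`. Since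
`exp (i⟪t, x - y⟫) = e_t(x) · conj (e_t(y))`, two applications of Fubini turn every double kernel
integral `E k(X, Y)` with `X ∼ P`, `Y ∼ Q` into `E[Φ_P(W) · conj Φ_Q(W)]`. Expanding
`|Φ₁ - Φ₂|² = (Φ₁ - Φ₂) · conj (Φ₁ - Φ₂)` produces the same four terms, except that one cross term
appears conjugated; it is nevertheless equal to the other one because `φ` is real.
-/

open MeasureTheory Complex ComplexConjugate
open scoped RealInnerProductSpace

section

variable {E : Type*} [NormedAddCommGroup E] [InnerProductSpace ℝ E]

lemma exp_inner_sub_mul_I_eq_mul_conj (t x y : E) :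
    exp (⟪t, x - y⟫ * I) = exp (⟪x, t⟫ * I) * conj (exp (⟪y, t⟫ * I)) := by
  rw [← exp_conj, ← exp_add, inner_sub_right, real_inner_comm x, real_inner_comm y]
  congr 1
  simp only [map_mul, conj_ofReal, conj_I]
  push_cast
  ring

variable [MeasurableSpace E] [BorelSpace E] [SecondCountableTopology E] {μ P Q : Measure E}
  [IsFiniteMeasure μ] [IsFiniteMeasure P] [IsFiniteMeasure Q]

lemma integrable_charFun_mul_conj :
    Integrable (fun t => charFun P t * conj (charFun Q t)) μ :=
  .of_bound (by fun_prop) (P.real Set.univ * Q.real Set.univ) <| .of_forall fun t => by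
    rw [norm_mul, RCLike.norm_conj]
    exact mul_le_mul (norm_charFun_le t) (norm_charFun_le t) (norm_nonneg _) (by positivity)

lemma integral_charFun_sub_eq_integral_mul_conj (x : E) :
    ∫ y, charFun μ (x - y) ∂Q = ∫ t, exp (⟪x, t⟫ * I) * conj (charFun Q t) ∂μ := by
  simp only [charFun_apply, exp_inner_sub_mul_I_eq_mul_conj]
  rw [integral_integral_swap]
  · simp only [integral_const_mul, integral_conj]
  · refine .of_bound (by fun_prop) 1 (.of_forall fun (y, t) => ?_)
    simp [norm_exp_ofReal_mul_I]

lemma integral_integral_charFun_sub :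
    ∫ x, ∫ y, charFun μ (x - y) ∂Q ∂P = ∫ t, charFun P t * conj (charFun Q t) ∂μ := by
  simp only [integral_charFun_sub_eq_integral_mul_conj]
  rw [integral_integral_swap]
  · simp only [integral_mul_const, charFun_apply]
  · refine .of_bound (by fun_prop) (Q.real Set.univ) (.of_forall fun (x, t) => ?_)
    simpa [norm_exp_ofReal_mul_I] using norm_charFun_le (μ := Q) t

lemma integral_charFun_mul_conj_comm (hμ : ∀ u, (charFun μ u).im = 0) :
    ∫ t, charFun Q t * conj (charFun P t) ∂μ = ∫ t, charFun P t * conj (charFun Q t) ∂μ := by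
  have h_real : conj (∫ t, charFun P t * conj (charFun Q t) ∂μ)
      = ∫ t, charFun P t * conj (charFun Q t) ∂μ := by
    simp only [← integral_integral_charFun_sub, ← integral_conj, conj_eq_iff_im.mpr (hμ _)]
  rw [← h_real, ← integral_conj]
  simp only [map_mul, conj_conj, mul_comm]

end

lemma ofReal_norm_sub_sq (a b : ℂ) :
    ((‖a - b‖ ^ 2 : ℝ) : ℂ) = a * conj a - a * conj b - b * conj a + b * conj b := by
  push_cast
  rw [← mul_conj', map_sub]
  ring

/-- The MMD defined from a translation invariant kernel `k(x,y) = E[exp(i Wᵀ(x-y))]`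
(assumed real-valued) equals the expected squared distance of characteristic functions. -/
theorem mmd_eq_expected_charFun_dist
    (d : ℕ)
    (μW P₁ P₂ : Measure (EuclideanSpace ℝ (Fin d)))
    [IsProbabilityMeasure μW] [IsProbabilityMeasure P₁] [IsProbabilityMeasure P₂]
    (k : EuclideanSpace ℝ (Fin d) → EuclideanSpace ℝ (Fin d) → ℂ)
    (hk : ∀ x y, k x y = ∫ w, Complex.exp ((⟪w, x - y⟫ : ℝ) * Complex.I) ∂μW)
    (hreal : ∀ u : EuclideanSpace ℝ (Fin d),
      (∫ w, Complex.exp ((⟪w, u⟫ : ℝ) * Complex.I) ∂μW).im = 0)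
    (Φ₁ Φ₂ : EuclideanSpace ℝ (Fin d) → ℂ)
    (hΦ₁ : ∀ z, Φ₁ z = ∫ x, Complex.exp ((⟪z, x⟫ : ℝ) * Complex.I) ∂P₁)
    (hΦ₂ : ∀ z, Φ₂ z = ∫ x, Complex.exp ((⟪z, x⟫ : ℝ) * Complex.I) ∂P₂) :
    (∫ x, ∫ x', k x x' ∂P₁ ∂P₁) - (∫ x, ∫ y', k x y' ∂P₂ ∂P₁)
      - (∫ x', ∫ y, k x' y ∂P₂ ∂P₁) + (∫ y, ∫ y', k y y' ∂P₂ ∂P₂)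
      = ((∫ w, ‖Φ₁ w - Φ₂ w‖ ^ 2 ∂μW : ℝ) : ℂ) := by
  obtain rfl : k = fun x y => charFun μW (x - y) := by
    ext x y; simp only [hk, charFun_apply]
  obtain rfl : Φ₁ = charFun P₁ := by ext z; simp only [hΦ₁, charFun_apply, real_inner_comm]
  obtain rfl : Φ₂ = charFun P₂ := by ext z; simp only [hΦ₂, charFun_apply, real_inner_comm]
  replace hreal : ∀ u, (charFun μW u).im = 0 := by
    simpa only [charFun_apply, real_inner_comm] using hreal
  simp only [integral_integral_charFun_sub]
  rw [← integral_complex_ofReal]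
  simp only [ofReal_norm_sub_sq]
  have h₁₁ := integrable_charFun_mul_conj (μ := μW) (P := P₁) (Q := P₁)
  have h₁₂ := integrable_charFun_mul_conj (μ := μW) (P := P₁) (Q := P₂)
  have h₂₁ := integrable_charFun_mul_conj (μ := μW) (P := P₂) (Q := P₁)
  have h₂₂ := integrable_charFun_mul_conj (μ := μW) (P := P₂) (Q := P₂)
  rw [integral_add ?_ h₂₂, integral_sub ?_ h₂₁, integral_sub h₁₁ h₁₂,
    integral_charFun_mul_conj_comm (P := P₁) (Q := P₂) hreal]
  exacts [h₁₁.sub h₁₂, (h₁₁.sub h₁₂).sub h₂₁]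
end

section
/- Let W₁,…,W_m ∈ ℝ^d and define the empirical measure P_m^W = (1/m) Σ_{l=1}^m δ_{W_l}. Let P, Q be probability measures on ℝ^d with characteristic functions Φ_P, Φ_Q and let k_m(x,y) = (1/m) Σ_{l=1}^m cos(W_lᵀ(x−y)). Then E[k_m(X,X')] − 2E[k_m(X,Y)] + E[k_m(Y,Y')] = (1/m) Σ_{l=1}^m |Φ_P(W_l) − Φ_Q(W_l)|², where X, X' ∼ P and Y, Y' ∼ Q are mutually independent. In particular this quantity is nonnegative. -/
open MeasureTheory Complex
open scoped RealInnerProductSpace BigOperators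

/-!
Writing `e_w(x) = exp(i⟪x, w⟫)`, the kernel term is a real inner product in `ℂ`:
`cos ⟪w, x - y⟫ = ⟪e_w(x), e_w(y)⟫`. Integrating in `y ∼ ν` and then `x ∼ μ` gives
`⟪Φ_μ(w), Φ_ν(w)⟫`, so the MMD² expression is, frequency by frequency,
`⟪Φ_P, Φ_P⟫ - 2⟪Φ_P, Φ_Q⟫ + ⟪Φ_Q, Φ_Q⟫ = ‖Φ_P - Φ_Q‖²`.
-/

open BoundedContinuousFunction

section CosKernel

variable {E : Type*} [NormedAddCommGroup E] [InnerProductSpace ℝ E]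

lemma cos_inner_sub_eq_inner_innerProbChar (w x y : E) :
    Real.cos ⟪w, x - y⟫ = ⟪innerProbChar w x, innerProbChar w y⟫ := by
  rw [Complex.inner, innerProbChar_apply, innerProbChar_apply, ← Complex.exp_conj,
    ← Complex.exp_add, map_mul, conj_ofReal, conj_I,
    show (⟪y, w⟫ : ℂ) * I + ⟪x, w⟫ * -I = ((⟪y, w⟫ - ⟪x, w⟫ : ℝ) : ℂ) * I by push_cast; ring,
    exp_ofReal_mul_I_re, ← Real.cos_neg, inner_sub_right, real_inner_comm w x,
    real_inner_comm w y, neg_sub]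

variable [MeasurableSpace E] [OpensMeasurableSpace E]

lemma integrable_cos_inner_sub (μ : Measure E) [IsFiniteMeasure μ] (w x : E) :
    Integrable (fun y ↦ Real.cos ⟪w, x - y⟫) μ := by
  simpa only [cos_inner_sub_eq_inner_innerProbChar] using
    ((innerProbChar w).integrable μ).const_inner (innerProbChar w x)

lemma integral_cos_inner_sub (μ : Measure E) [IsFiniteMeasure μ] (w x : E) :
    ∫ y, Real.cos ⟪w, x - y⟫ ∂μ = ⟪innerProbChar w x, charFun μ w⟫ := by
  simp_rw [cos_inner_sub_eq_inner_innerProbChar, charFun_eq_integral_innerProbChar]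
  exact integral_inner ((innerProbChar w).integrable μ) _

lemma integral_integral_cos_inner_sub (μ ν : Measure E) [IsFiniteMeasure μ] [IsFiniteMeasure ν]
    (w : E) :
    ∫ x, ∫ y, Real.cos ⟪w, x - y⟫ ∂ν ∂μ = ⟪charFun μ w, charFun ν w⟫ := by
  simp_rw [integral_cos_inner_sub, real_inner_comm (charFun ν w),
    charFun_eq_integral_innerProbChar]
  exact integral_inner ((innerProbChar w).integrable μ) _

lemma integral_integral_sum_cos_inner_sub {ι : Type*} (s : Finset ι) (W : ι → E)
    (μ ν : Measure E) [IsFiniteMeasure μ] [IsFiniteMeasure ν] :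
    ∫ x, ∫ y, ∑ l ∈ s, Real.cos ⟪W l, x - y⟫ ∂ν ∂μ
      = ∑ l ∈ s, ⟪charFun μ (W l), charFun ν (W l)⟫ := by
  have hinner (x : E) : ∫ y, ∑ l ∈ s, Real.cos ⟪W l, x - y⟫ ∂ν
      = ∑ l ∈ s, ⟪innerProbChar (W l) x, charFun ν (W l)⟫ := by
    rw [integral_finsetSum _ fun l _ ↦ integrable_cos_inner_sub ν (W l) x]
    simp_rw [integral_cos_inner_sub]
  simp_rw [hinner]
  rw [integral_finsetSum _ fun l _ ↦ ((innerProbChar (W l)).integrable μ).inner_const _]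
  simp_rw [← integral_cos_inner_sub, integral_integral_cos_inner_sub]

end CosKernel

theorem empirical_mmd_sq_eq_charFun_dist_general
    (d m : ℕ) (W : Fin m → EuclideanSpace ℝ (Fin d))
    (P Q : Measure (EuclideanSpace ℝ (Fin d)))
    [IsProbabilityMeasure P] [IsProbabilityMeasure Q]
    (ΦP ΦQ : EuclideanSpace ℝ (Fin d) → ℂ)
    (hΦP : ∀ z, ΦP z = ∫ x, Complex.exp ((⟪z, x⟫ : ℝ) * Complex.I) ∂P)
    (hΦQ : ∀ z, ΦQ z = ∫ x, Complex.exp ((⟪z, x⟫ : ℝ) * Complex.I) ∂Q)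
    (km : EuclideanSpace ℝ (Fin d) → EuclideanSpace ℝ (Fin d) → ℝ)
    (hkm : ∀ x y, km x y = (1 / (m : ℝ)) * ∑ l : Fin m, Real.cos (⟪W l, x - y⟫ : ℝ)) :
    (∫ x, ∫ x', km x x' ∂P ∂P) - 2 * (∫ x, ∫ y, km x y ∂Q ∂P)
        + (∫ y, ∫ y', km y y' ∂Q ∂Q)
      = (1 / (m : ℝ)) * ∑ l : Fin m, ‖ΦP (W l) - ΦQ (W l)‖ ^ 2 ∧
    0 ≤ (∫ x, ∫ x', km x x' ∂P ∂P) - 2 * (∫ x, ∫ y, km x y ∂Q ∂P)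
        + (∫ y, ∫ y', km y y' ∂Q ∂Q) := by
  have hP : ΦP = charFun P := funext fun z ↦ by simp_rw [hΦP, charFun_apply, real_inner_comm]
  have hQ : ΦQ = charFun Q := funext fun z ↦ by simp_rw [hΦQ, charFun_apply, real_inner_comm]
  have hmmd : (∫ x, ∫ x', km x x' ∂P ∂P) - 2 * (∫ x, ∫ y, km x y ∂Q ∂P)
        + (∫ y, ∫ y', km y y' ∂Q ∂Q)
      = (1 / (m : ℝ)) * ∑ l : Fin m, ‖ΦP (W l) - ΦQ (W l)‖ ^ 2 := by
    simp_rw [hkm, integral_const_mul, integral_integral_sum_cos_inner_sub, hP, hQ,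
      norm_sub_sq_real, ← real_inner_self_eq_norm_sq, Finset.sum_add_distrib,
      Finset.sum_sub_distrib, ← Finset.mul_sum]
    ring
  exact ⟨hmmd, hmmd ▸ by positivity⟩

/-- For the empirical kernel `k_m`, the population MMD² equals the average squared distance of
characteristic functions at the sampled frequencies, and in particular is nonnegative. -/
theorem empirical_mmd_sq_eq_charFun_dist
    (d m : ℕ) (hm : 0 < m) (W : Fin m → EuclideanSpace ℝ (Fin d))
    (P Q : Measure (EuclideanSpace ℝ (Fin d)))
    [IsProbabilityMeasure P] [IsProbabilityMeasure Q]
    (ΦP ΦQ : EuclideanSpace ℝ (Fin d) → ℂ)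
    (hΦP : ∀ z, ΦP z = ∫ x, Complex.exp ((⟪z, x⟫ : ℝ) * Complex.I) ∂P)
    (hΦQ : ∀ z, ΦQ z = ∫ x, Complex.exp ((⟪z, x⟫ : ℝ) * Complex.I) ∂Q)
    (km : EuclideanSpace ℝ (Fin d) → EuclideanSpace ℝ (Fin d) → ℝ)
    (hkm : ∀ x y, km x y = (1 / (m : ℝ)) * ∑ l : Fin m, Real.cos (⟪W l, x - y⟫ : ℝ)) :
    (∫ x, ∫ x', km x x' ∂P ∂P) - 2 * (∫ x, ∫ y, km x y ∂Q ∂P)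
        + (∫ y, ∫ y', km y y' ∂Q ∂Q)
      = (1 / (m : ℝ)) * ∑ l : Fin m, ‖ΦP (W l) - ΦQ (W l)‖ ^ 2 ∧
    0 ≤ (∫ x, ∫ x', km x x' ∂P ∂P) - 2 * (∫ x, ∫ y, km x y ∂Q ∂P)
        + (∫ y, ∫ y', km y y' ∂Q ∂Q) :=
  empirical_mmd_sq_eq_charFun_dist_general d m W P Q ΦP ΦQ hΦP hΦQ km hkm
end

section
/- Let P, Q be probability measures on ℝ^d with characteristic functions Φ_P, Φ_Q and let W be a random vector in ℝ^d. If MMD(P,Q)² := E[|Φ_P(W) − Φ_Q(W)|²] = 0 and the support of W is all of ℝ^d, then Φ_P = Φ_Q on ℝ^d, and hence P = Q. -/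
open MeasureTheory Complex
open scoped RealInnerProductSpace

section CharFun

variable {E : Type*} [NormedAddCommGroup E] [InnerProductSpace ℝ E] [MeasurableSpace E]
  [BorelSpace E] [SecondCountableTopology E]
  (ν P Q : Measure E) [IsFiniteMeasure ν] [IsProbabilityMeasure P] [IsProbabilityMeasure Q]

lemma integrable_norm_charFun_sub_sq :
    Integrable (fun t ↦ ‖charFun P t - charFun Q t‖ ^ 2) ν := by
  refine .of_bound (by fun_prop) (2 ^ 2) (ae_of_all _ fun t ↦ ?_)
  have hP := norm_charFun_le_one (μ := P) t
  have hQ := norm_charFun_le_one (μ := Q) t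
  have h : ‖charFun P t - charFun Q t‖ ≤ 2 := (norm_sub_le _ _).trans (by linarith)
  rw [norm_pow, norm_norm]
  gcongr

lemma charFun_eq_of_integral_norm_charFun_sub_sq_eq_zero [ν.IsOpenPosMeasure]
    (h : ∫ t, ‖charFun P t - charFun Q t‖ ^ 2 ∂ν = 0) : charFun P = charFun Q := by
  have hae : (fun t ↦ ‖charFun P t - charFun Q t‖ ^ 2) =ᵐ[ν] 0 :=
    (integral_eq_zero_iff_of_nonneg (fun _ ↦ sq_nonneg _)
      (integrable_norm_charFun_sub_sq ν P Q)).mp h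
  refine (continuous_charFun.ae_eq_iff_eq ν continuous_charFun).mp ?_
  filter_upwards [hae] with t ht
  simpa [sub_eq_zero] using ht

end CharFun

/-- If `MMD(P,Q)² = E[|Φ_P(W) - Φ_Q(W)|²] = 0` and `W` has full support, then the
characteristic functions agree everywhere and hence `P = Q`. -/
theorem mmd_eq_zero_imp_eq
    (d : ℕ) (μW P Q : Measure (EuclideanSpace ℝ (Fin d)))
    [IsProbabilityMeasure μW] [IsProbabilityMeasure P] [IsProbabilityMeasure Q]
    (hsupp : ∀ U : Set (EuclideanSpace ℝ (Fin d)), IsOpen U → U.Nonempty → 0 < μW U)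
    (ΦP ΦQ : EuclideanSpace ℝ (Fin d) → ℂ)
    (hΦP : ∀ z, ΦP z = ∫ x, Complex.exp ((⟪z, x⟫ : ℝ) * Complex.I) ∂P)
    (hΦQ : ∀ z, ΦQ z = ∫ x, Complex.exp ((⟪z, x⟫ : ℝ) * Complex.I) ∂Q)
    (hzero : ∫ w, ‖ΦP w - ΦQ w‖ ^ 2 ∂μW = 0) :
    (∀ z, ΦP z = ΦQ z) ∧ P = Q := by
  have hP : ΦP = charFun P := funext fun z ↦ by simp_rw [hΦP, charFun_apply, real_inner_comm]
  have hQ : ΦQ = charFun Q := funext fun z ↦ by simp_rw [hΦQ, charFun_apply, real_inner_comm]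
  have : μW.IsOpenPosMeasure := ⟨fun U hU hne ↦ (hsupp U hU hne).ne'⟩
  subst hP hQ
  have hchar := charFun_eq_of_integral_norm_charFun_sub_sq_eq_zero μW P Q hzero
  exact ⟨congrFun hchar, Measure.ext_of_charFun hchar⟩
end
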